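/- arXiv:2502.06436 — 2 statements merged into one kernel-verified Lean document; each statement's English description precedes it below -/
import Mathlib

section
/- Let X = φ^{-1}(0) ⊆ (ℂ^n,0) be a complex hypersurface germ and f : (ℂ^n,0)→(ℂ,0) a holomorphic germ with an isolated singularity at 0. Then dim_ℂ df(Θ_X)/df(Θ_X^0) = s, where s is the dimension of the ℂ-linear span of {η(0) : η ∈ Θ_X} in ℂ^n. -/
/-!
The map `df(η) ↦ η(0)` is a well-defined linear map `df(Θ_X) → ℂⁿ` with kernel `df(Θ_X⁰)` and
image the span of the values `η(0)`; everything rests on its well-definedness: a holomorphic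
vector field `ξ` with `ξ(f) = 0` vanishes at `0`. Differentiating `ξ(f) = 0` shows that along an
integral curve `γ` of `ξ` starting at `0` the gradient of `f` solves a linear ODE, so by Grönwall
it stays `0`. Thus `γ` stays in the critical locus of `f`, which near `0` is `{0}`, and
`ξ(0) = γ'(0) = 0`.
-/

open Filter Topology

/-- `ℂ^n`. -/
abbrev Cn (n : ℕ) := Fin n → ℂ

/-- The `i`-th partial derivative of `f : ℂ^n → ℂ` at `x`. -/
noncomputable def pdC {n : ℕ} (i : Fin n) (f : Cn n → ℂ) (x : Cn n) : ℂ :=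
  fderiv ℂ f x (Pi.single i 1)

/-- `f` has an isolated singularity at `0`. -/
def IsolatedSingAt {n : ℕ} (f : Cn n → ℂ) : Prop :=
  (∀ i, pdC i f 0 = 0) ∧ ∀ᶠ x in 𝓝 (0 : Cn n), (∀ i, pdC i f x = 0) → x = 0

/-- A (representative of a) germ at `0` of holomorphic vector field tangent to the
hypersurface `X = φ⁻¹(0)`: each component is holomorphic at `0` and
`η(φ) = Σ_i η_i ∂φ/∂x_i` lies in the ideal `(φ)`. -/
def TangentVF {n : ℕ} (φ : Cn n → ℂ) (η : Cn n → Cn n) : Prop :=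
  (∀ i, AnalyticAt ℂ (fun x => η x i) 0) ∧
  ∃ h : Cn n → ℂ, AnalyticAt ℂ h 0 ∧
    ∀ᶠ x in 𝓝 (0 : Cn n), (∑ i, η x i * pdC i φ x) = h x * φ x

/-- The space of germs at `0` of functions `ℂ^n → ℂ`. -/
abbrev GermC (n : ℕ) := Filter.Germ (𝓝 (0 : Cn n)) ℂ

/-- `df(Θ_X)` as a `ℂ`-subspace of the space of germs at `0`. -/
noncomputable def dfThetaX {n : ℕ} (φ f : Cn n → ℂ) : Submodule ℂ (GermC n) :=
  Submodule.span ℂ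
    {g | ∃ η, TangentVF φ η ∧ ((fun x => ∑ i, η x i * pdC i f x : Cn n → ℂ) : GermC n) = g}

/-- `df(Θ_X^0)` as a `ℂ`-subspace of the space of germs at `0`. -/
noncomputable def dfThetaX0 {n : ℕ} (φ f : Cn n → ℂ) : Submodule ℂ (GermC n) :=
  Submodule.span ℂ
    {g | ∃ η, TangentVF φ η ∧ η 0 = 0 ∧
      ((fun x => ∑ i, η x i * pdC i f x : Cn n → ℂ) : GermC n) = g}

open Set

variable {n : ℕ}

section Calculus

variable {f : Cn n → ℂ} {x : Cn n}

lemma pdC_analyticAt (hf : AnalyticAt ℂ f x) (i : Fin n) : AnalyticAt ℂ (pdC i f) x :=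
  ((ContinuousLinearMap.apply ℂ ℂ (Pi.single i 1)).analyticAt _).fun_comp hf.fderiv

lemma fderiv_apply_eq_sum_mul_pdC (v : Cn n) : fderiv ℂ f x v = ∑ i, v i * pdC i f x := by
  conv_lhs => rw [pi_eq_sum_univ' v]
  simp [pdC, smul_eq_mul]

lemma pdC_pdC_eq_fderiv_fderiv (hf : AnalyticAt ℂ f x) (i j : Fin n) :
    pdC i (pdC j f) x = fderiv ℂ (fderiv ℂ f) x (Pi.single i 1) (Pi.single j 1) := by
  change fderiv ℂ (fun y => fderiv ℂ f y (Pi.single j 1)) x (Pi.single i 1) = _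
  rw [fderiv_clm_apply hf.fderiv.differentiableAt (differentiableAt_const _)]
  simp

lemma pdC_pdC_comm (hf : AnalyticAt ℂ f x) (i j : Fin n) :
    pdC i (pdC j f) x = pdC j (pdC i f) x := by
  rw [pdC_pdC_eq_fderiv_fderiv hf, pdC_pdC_eq_fderiv_fderiv hf]
  exact (hf.contDiffAt (n := 2)).isSymmSndFDerivAt (by norm_num) _ _

lemma pdC_mul {a b : Cn n → ℂ} (ha : DifferentiableAt ℂ a x) (hb : DifferentiableAt ℂ b x)
    (j : Fin n) : pdC j (fun y => a y * b y) x = pdC j a x * b x + a x * pdC j b x := by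
  simp only [pdC, fderiv_fun_mul ha hb, add_apply, smul_apply, smul_eq_mul]
  ring

/-- Differentiate `ξ(f) = 0` and use the symmetry of the Hessian of `f`. -/
lemma fderiv_pdC_apply_eq_neg_sum {ξ : Cn n → Cn n} (hf : AnalyticAt ℂ f x)
    (hξ : ∀ i, DifferentiableAt ℂ (fun y => ξ y i) x)
    (hrel : (fun y => ∑ i, ξ y i * pdC i f y) =ᶠ[𝓝 x] 0) (j : Fin n) :
    fderiv ℂ (pdC j f) x (ξ x) = -∑ i, pdC j (fun y => ξ y i) x * pdC i f x := by
  have hpd : ∀ i, DifferentiableAt ℂ (pdC i f) x :=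
    fun i => (pdC_analyticAt hf i).differentiableAt
  have hzero : ∑ i, (pdC j (fun y => ξ y i) x * pdC i f x + ξ x i * pdC j (pdC i f) x) = 0 := by
    have h := congrArg (fun L : Cn n →L[ℂ] ℂ => L (Pi.single j 1)) hrel.fderiv_eq
    rw [fderiv_fun_sum (A := fun i y => ξ y i * pdC i f y) fun i _ => (hξ i).mul (hpd i)] at h
    simp only [fderiv_zero, Pi.zero_apply, sum_apply, zero_apply] at h
    rw [← h]
    exact Finset.sum_congr rfl fun i _ => (pdC_mul (hξ i) (hpd i) j).symm
  rw [Finset.sum_add_distrib, add_eq_zero_iff_neg_eq'] at hzero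
  rw [fderiv_apply_eq_sum_mul_pdC, ← hzero, neg_neg]
  exact Finset.sum_congr rfl fun i _ => by rw [pdC_pdC_comm hf]

end Calculus

section IntegralCurve

variable {E : Type*} [NormedAddCommGroup E] [NormedSpace ℝ E]

lemma exists_integralCurve_Icc_subset [CompleteSpace E] {ξ : E → E} {x₀ : E}
    (hξ : ContDiffAt ℝ 1 ξ x₀) {U : Set E} (hU : U ∈ 𝓝 x₀) :
    ∃ γ : ℝ → E, ∃ b > 0, γ 0 = x₀ ∧ ∀ t ∈ Icc 0 b, γ t ∈ U ∧ HasDerivAt γ (ξ (γ t)) t := by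
  obtain ⟨γ, hγ0, ε, hε, hγ⟩ := hξ.exists_forall_mem_closedBall_exists_eq_forall_mem_Ioo_hasDerivAt₀ 0
  have hderiv : ∀ᶠ t in 𝓝 0, HasDerivAt γ (ξ (γ t)) t :=
    eventually_of_mem (Ioo_mem_nhds (by linarith) (by linarith)) hγ
  have hmem : ∀ᶠ t in 𝓝 0, γ t ∈ U :=
    hderiv.self_of_nhds.continuousAt.preimage_mem_nhds (hγ0 ▸ hU)
  obtain ⟨b, hb, hsub⟩ := (nhds_basis_Icc_pos (0 : ℝ)).mem_iff.1 (hmem.and hderiv)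
  exact ⟨γ, b, hb, hγ0, fun t ht => hsub ⟨by linarith [ht.1], by linarith [ht.2]⟩⟩

lemma eq_zero_of_hasDerivAt_of_forall_Icc_eq {γ : ℝ → E} {v : E} {b : ℝ} (hb : 0 < b)
    (hγ : HasDerivAt γ v 0) (hconst : ∀ t ∈ Icc 0 b, γ t = γ 0) : v = 0 :=
  (uniqueDiffOn_Icc hb 0 ⟨le_rfl, hb.le⟩).eq_deriv _ hγ.hasDerivWithinAt
    ((hasDerivWithinAt_const 0 _ (γ 0)).congr hconst rfl)

end IntegralCurve

lemma norm_sum_mul_le {ι κ R : Type*} [Fintype ι] [Fintype κ] [SeminormedRing R]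
    (A : κ → ι → R) (v : ι → R) :
    ‖fun j => ∑ i, A j i * v i‖ ≤ (∑ j, ∑ i, ‖A j i‖) * ‖v‖ := by
  refine (pi_norm_le_iff_of_nonneg (by positivity)).2 fun j => ?_
  calc ‖∑ i, A j i * v i‖ ≤ ∑ i, ‖A j i‖ * ‖v‖ :=
        (norm_sum_le _ _).trans <| Finset.sum_le_sum fun i _ =>
          (norm_mul_le _ _).trans <| by gcongr; exact norm_le_pi_norm v i
    _ = (∑ i, ‖A j i‖) * ‖v‖ := (Finset.sum_mul ..).symm
    _ ≤ (∑ j, ∑ i, ‖A j i‖) * ‖v‖ := by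
        gcongr
        exact Finset.single_le_sum (f := fun j => ∑ i, ‖A j i‖) (fun _ _ => by positivity)
          (Finset.mem_univ j)

lemma pdC_comp_eq_zero_of_hasDerivAt {f : Cn n → ℂ} {ξ : Cn n → Cn n} {γ : ℝ → Cn n} {b : ℝ}
    (hf : ∀ t ∈ Icc 0 b, AnalyticAt ℂ f (γ t))
    (hξ : ∀ t ∈ Icc 0 b, ∀ i, AnalyticAt ℂ (fun y => ξ y i) (γ t))
    (hrel : ∀ t ∈ Icc 0 b, (fun y => ∑ i, ξ y i * pdC i f y) =ᶠ[𝓝 (γ t)] 0)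
    (hγ : ∀ t ∈ Icc 0 b, HasDerivAt γ (ξ (γ t)) t) (h0 : ∀ j, pdC j f (γ 0) = 0) :
    ∀ t ∈ Icc 0 b, ∀ j, pdC j f (γ t) = 0 := by
  set A : ℝ → Fin n → Fin n → ℂ := fun t j i => pdC j (fun y => ξ y i) (γ t)
  set g : ℝ → Cn n := fun t j => pdC j f (γ t)
  have hg : ∀ t ∈ Icc 0 b, HasDerivAt g (-fun j => ∑ i, A t j i * g t i) t := by
    intro t ht
    refine hasDerivAt_pi.2 fun j => ?_
    have hchain := ((pdC_analyticAt (hf t ht) j).differentiableAt.hasFDerivAt.restrictScalars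
      ℝ).comp_hasDerivAt t (hγ t ht)
    rwa [ContinuousLinearMap.coe_restrictScalars', fderiv_pdC_apply_eq_neg_sum (hf t ht)
      (fun i => (hξ t ht i).differentiableAt) (hrel t ht)] at hchain
  have hA : ContinuousOn (fun t => ∑ j, ∑ i, ‖A t j i‖) (Icc 0 b) := by
    refine continuousOn_finsetSum _ fun j _ => continuousOn_finsetSum _ fun i _ => ?_
    exact fun t ht => ((pdC_analyticAt (hξ t ht i) j).continuousAt.comp_continuousWithinAt
      (hγ t ht).continuousAt.continuousWithinAt).norm
  obtain ⟨K, hK⟩ := isCompact_Icc.exists_bound_of_continuousOn hA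
  have hbound : ∀ t ∈ Ico 0 b, ‖-fun j => ∑ i, A t j i * g t i‖ ≤ K * ‖g t‖ := fun t ht => by
    rw [norm_neg]
    exact (norm_sum_mul_le _ _).trans <| by
      gcongr; exact (le_abs_self _).trans (hK t (Ico_subset_Icc_self ht))
  have hg0 := eq_zero_of_abs_deriv_le_mul_abs_self_of_eq_zero_right
    (fun t ht => (hg t ht).continuousAt.continuousWithinAt)
    (fun t ht => (hg t (Ico_subset_Icc_self ht)).hasDerivWithinAt) (funext h0) hbound
  exact fun t ht => congrFun (hg0 t ht)

theorem IsolatedSingAt.eq_zero_of_sum_mul_pdC_eq_zero {f : Cn n → ℂ} (hf : AnalyticAt ℂ f 0)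
    (hiso : IsolatedSingAt f) {ξ : Cn n → Cn n} (hξ : ∀ i, AnalyticAt ℂ (fun x => ξ x i) 0)
    (hrel : ∀ᶠ x in 𝓝 0, ∑ i, ξ x i * pdC i f x = 0) : ξ 0 = 0 := by
  have hU : ∀ᶠ x in 𝓝 (0 : Cn n), AnalyticAt ℂ f x ∧ (∀ i, AnalyticAt ℂ (fun y => ξ y i) x) ∧
      (fun y => ∑ i, ξ y i * pdC i f y) =ᶠ[𝓝 x] 0 ∧ ((∀ i, pdC i f x = 0) → x = 0) := by
    filter_upwards [hf.eventually_analyticAt,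
      eventually_all.2 fun i => (hξ i).eventually_analyticAt, hrel.eventually_nhds, hiso.2]
      with x hfx hξx hrelx hisox using ⟨hfx, hξx, hrelx, hisox⟩
  have hξ_smooth : ContDiffAt ℝ 1 ξ 0 := (analyticAt_pi_iff.2 hξ).restrictScalars.contDiffAt
  obtain ⟨γ, b, hb, hγ0, hγ⟩ := exists_integralCurve_Icc_subset hξ_smooth hU
  have hcrit := pdC_comp_eq_zero_of_hasDerivAt (fun t ht => (hγ t ht).1.1)
    (fun t ht => (hγ t ht).1.2.1) (fun t ht => (hγ t ht).1.2.2.1) (fun t ht => (hγ t ht).2)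
    (hγ0 ▸ hiso.1)
  have hγ_const : ∀ t ∈ Icc 0 b, γ t = γ 0 := fun t ht => by
    rw [hγ0]; exact (hγ t ht).1.2.2.2 (hcrit t ht)
  simpa [hγ0] using eq_zero_of_hasDerivAt_of_forall_Icc_eq hb (hγ 0 ⟨le_rfl, hb.le⟩).2 hγ_const

namespace LinearMap

variable {R M N P : Type*} [Ring R] [AddCommGroup M] [AddCommGroup N] [AddCommGroup P]
  [Module R M] [Module R N] [Module R P]

/-- When `ker D ≤ ker E`, the map `D x ↦ E x` is well defined on `range D`, with kernel
`D (ker E)`. -/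
noncomputable def rangeQuotientMapKerEquivRange (D : M →ₗ[R] N) (E : M →ₗ[R] P)
    (h : ker D ≤ ker E) :
    (range D ⧸ (Submodule.map D (ker E)).comap (range D).subtype) ≃ₗ[R] range E :=
  let π : M →ₗ[R] range D ⧸ (Submodule.map D (ker E)).comap (range D).subtype :=
    Submodule.mkQ _ ∘ₗ D.rangeRestrict
  have hπ : Function.Surjective π :=
    (Submodule.mkQ_surjective _).comp D.surjective_rangeRestrict
  have hker : ker π = ker E := by
    ext x
    simp only [π, mem_ker, comp_apply, Submodule.mkQ_apply, Submodule.Quotient.mk_eq_zero,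
      Submodule.mem_comap, Submodule.subtype_apply]
    change D x ∈ Submodule.map D (ker E) ↔ x ∈ ker E
    rw [← Submodule.mem_comap, Submodule.comap_map_eq, sup_eq_left.2 h]
  (π.quotKerEquivOfSurjective hπ).symm ≪≫ₗ Submodule.quotEquivOfEq _ _ hker ≪≫ₗ
    E.quotKerEquivRange

end LinearMap

section TangentVectorFields

variable {φ f : Cn n → ℂ}

lemma TangentVF.zero : TangentVF φ 0 :=
  ⟨fun _ => analyticAt_const, 0, analyticAt_const, by simp⟩

lemma TangentVF.add {η ζ : Cn n → Cn n} (hη : TangentVF φ η) (hζ : TangentVF φ ζ) :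
    TangentVF φ (η + ζ) := by
  obtain ⟨hη, a, ha, hηa⟩ := hη
  obtain ⟨hζ, b, hb, hζb⟩ := hζ
  refine ⟨fun i => (hη i).add (hζ i), a + b, ha.add hb, ?_⟩
  filter_upwards [hηa, hζb] with x hx hx'
  simp only [Pi.add_apply, add_mul, Finset.sum_add_distrib, hx, hx']

lemma TangentVF.smul (c : ℂ) {η : Cn n → Cn n} (hη : TangentVF φ η) : TangentVF φ (c • η) := by
  obtain ⟨hη, a, ha, hηa⟩ := hη
  refine ⟨fun i => analyticAt_const.mul (hη i), c • a, analyticAt_const.smul ha, ?_⟩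
  filter_upwards [hηa] with x hx
  simp only [Pi.smul_apply, smul_eq_mul, mul_assoc, ← Finset.mul_sum, hx]

/-- `Θ_X`, as a submodule of the space of all vector fields. -/
def tangentVF (φ : Cn n → ℂ) : Submodule ℂ (Cn n → Cn n) where
  carrier := {η | TangentVF φ η}
  zero_mem' := TangentVF.zero
  add_mem' := TangentVF.add
  smul_mem' := TangentVF.smul

@[simp]
lemma mem_tangentVF {η : Cn n → Cn n} : η ∈ tangentVF φ ↔ TangentVF φ η := Iff.rfl

noncomputable def dfLinearMap (f : Cn n → ℂ) : (Cn n → Cn n) →ₗ[ℂ] GermC n where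
  toFun η := ((fun x => ∑ i, η x i * pdC i f x : Cn n → ℂ) : GermC n)
  map_add' η ζ := by
    simp only [Pi.add_apply, add_mul, Finset.sum_add_distrib]
    rfl
  map_smul' c η := by
    simp only [Pi.smul_apply, smul_eq_mul, mul_assoc, ← Finset.mul_sum]
    rfl

@[simp]
lemma dfLinearMap_apply (η : Cn n → Cn n) :
    dfLinearMap f η = ((fun x => ∑ i, η x i * pdC i f x : Cn n → ℂ) : GermC n) := rfl

lemma dfThetaX_eq_range :
    dfThetaX φ f = LinearMap.range ((dfLinearMap f).domRestrict (tangentVF φ)) := by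
  rw [dfThetaX, ← Submodule.span_eq (LinearMap.range _)]
  congr 1
  ext g
  simp

lemma dfThetaX0_eq_map : dfThetaX0 φ f = Submodule.map ((dfLinearMap f).domRestrict (tangentVF φ))
    (LinearMap.ker ((LinearMap.proj 0).domRestrict (tangentVF φ))) := by
  rw [dfThetaX0, ← Submodule.span_eq (Submodule.map _ _), Submodule.map_coe]
  congr 1
  ext g
  simp [and_left_comm]

lemma span_eval_eq_range : Submodule.span ℂ {y : Cn n | ∃ η, TangentVF φ η ∧ η 0 = y} =
    LinearMap.range ((LinearMap.proj 0).domRestrict (tangentVF φ)) := by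
  rw [← Submodule.span_eq (LinearMap.range _)]
  congr 1
  ext g
  simp

lemma ker_dfLinearMap_le_ker_eval (hf : AnalyticAt ℂ f 0) (hiso : IsolatedSingAt f) :
    LinearMap.ker ((dfLinearMap f).domRestrict (tangentVF φ)) ≤
      LinearMap.ker ((LinearMap.proj 0).domRestrict (tangentVF φ)) := by
  rintro ⟨η, hη⟩ hdf
  exact hiso.eq_zero_of_sum_mul_pdC_eq_zero hf hη.1 (Filter.Germ.coe_eq.1 hdf)

end TangentVectorFields

theorem statement1_general (n : ℕ) (φ f : Cn n → ℂ)
    (hf : AnalyticAt ℂ f 0)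
    (hiso : IsolatedSingAt f) :
    Module.finrank ℂ
        ((dfThetaX φ f) ⧸ (Submodule.comap (dfThetaX φ f).subtype (dfThetaX0 φ f))) =
      Module.finrank ℂ
        (Submodule.span ℂ {y : Cn n | ∃ η, TangentVF φ η ∧ η 0 = y}) := by
  rw [dfThetaX0_eq_map, dfThetaX_eq_range, span_eval_eq_range]
  exact (LinearMap.rangeQuotientMapKerEquivRange _ _
    (ker_dfLinearMap_le_ker_eval hf hiso)).finrank_eq

/-- For a hypersurface germ `X = φ⁻¹(0) ⊆ (ℂ^n,0)` and a holomorphic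
germ `f` with isolated singularity at `0`, `dim_ℂ df(Θ_X)/df(Θ_X^0) = s`, where `s` is the
dimension of the span of `{η(0) : η ∈ Θ_X}` in `ℂ^n`. -/
theorem statement1 (n : ℕ) (φ f : Cn n → ℂ)
    (hφ : AnalyticAt ℂ φ 0) (hφ0 : φ 0 = 0)
    (hf : AnalyticAt ℂ f 0) (hf0 : f 0 = 0)
    (hiso : IsolatedSingAt f) :
    Module.finrank ℂ
        ((dfThetaX φ f) ⧸ (Submodule.comap (dfThetaX φ f).subtype (dfThetaX0 φ f))) =
      Module.finrank ℂ
        (Submodule.span ℂ {y : Cn n | ∃ η, TangentVF φ η ∧ η 0 = y}) :=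
  statement1_general n φ f hf hiso
end

section
/- Let X = φ^{-1}(0) ⊆ (ℂ^n,0) be a complex hypersurface germ and f : (ℂ^n,0)→(ℂ,0) a holomorphic germ with an isolated singularity at 0 such that μ_BR(f,X) is finite. Then ℛ_X-cod(f) = μ_BR(f,X) + s − 1, where s is the dimension of the ℂ-linear span of {η(0) : η ∈ Θ_X} in ℂ^n. -/
/-!
Since `f` is singular at `0`, `df(Θ_X) ⊆ 𝔪_n`, so `μ_BR(f,X) = 1 + dim 𝔪_n / df(Θ_X)` and
`ℛ_X-cod(f) = dim 𝔪_n / df(Θ_X) + dim df(Θ_X) / df(Θ_X^0)`. The last quotient is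
`Θ_X / Θ_X^0 ≅ span {η(0)}`, of dimension `s`, because `η ↦ df(η)` is injective modulo `Θ_X^0`:
if `df(η) ≡ 0` then `η(0) = 0`. Indeed, along the integral curve `γ` of `η` through `0` the
differential `df(γ(t))` solves a linear ODE (differentiate `df(η) = 0`) with zero initial value,
so it vanishes identically; `γ` then stays in the critical locus `{0}`, and `η(0) = γ'(0) = 0`.
-/

open Filter Topology

/-- The ring `𝒪_n` of holomorphic germs at `0`, as a `ℂ`-subspace of the germ space. -/
noncomputable def On (n : ℕ) : Submodule ℂ (GermC n) :=
  Submodule.span ℂ {g | ∃ f : Cn n → ℂ, AnalyticAt ℂ f 0 ∧ ((f : Cn n → ℂ) : GermC n) = g}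

/-- The maximal ideal `𝔪_n ⊆ 𝒪_n`, as a `ℂ`-subspace of the germ space. -/
noncomputable def mn (n : ℕ) : Submodule ℂ (GermC n) :=
  Submodule.span ℂ
    {g | ∃ f : Cn n → ℂ, AnalyticAt ℂ f 0 ∧ f 0 = 0 ∧ ((f : Cn n → ℂ) : GermC n) = g}

/-- The Bruce–Roberts number `μ_BR(f,X) = dim_ℂ 𝒪_n / df(Θ_X)` (as a module). -/
noncomputable abbrev BRQuot {n : ℕ} (φ f : Cn n → ℂ) :=
  (On n) ⧸ (Submodule.comap (On n).subtype (dfThetaX φ f))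

/-- The module `𝔪_n / df(Θ_X^0)` whose dimension is the `ℛ_X`-codimension of `f`. -/
noncomputable abbrev RXQuot {n : ℕ} (φ f : Cn n → ℂ) :=
  (mn n) ⧸ (Submodule.comap (mn n).subtype (dfThetaX0 φ f))

namespace Submodule

variable {R M N : Type*} [Ring R] [AddCommGroup M] [Module R M] [AddCommGroup N] [Module R N]

noncomputable def mapQuotientEquiv (L : M →ₗ[R] N) {T₀ T : Submodule R M} (h₀ : T₀ ≤ T)
    (hker : T ⊓ LinearMap.ker L ≤ T₀) :
    (↥(T.map L) ⧸ (T₀.map L).comap (T.map L).subtype) ≃ₗ[R] ↥T ⧸ T₀.comap T.subtype :=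
  let g := ((T₀.map L).comap (T.map L).subtype).mkQ ∘ₗ L.submoduleMap T
  have hg : Function.Surjective g :=
    (Submodule.mkQ_surjective _).comp (L.submoduleMap_surjective T)
  have hkerg : LinearMap.ker g = T₀.comap T.subtype := by
    ext ⟨x, hx⟩
    simp only [g, LinearMap.mem_ker, LinearMap.comp_apply, mkQ_apply, Quotient.mk_eq_zero,
      mem_comap, subtype_apply, LinearMap.submoduleMap_coe_apply, mem_map]
    refine ⟨fun ⟨y, hy, hxy⟩ => ?_, fun hx₀ => ⟨x, hx₀, rfl⟩⟩
    have hdiff : x - y ∈ T ⊓ LinearMap.ker L :=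
      ⟨sub_mem hx (h₀ hy), by simp [LinearMap.mem_ker, hxy]⟩
    simpa using add_mem (hker hdiff) hy
  ((quotEquivOfEq _ _ hkerg.symm).trans (g.quotKerEquivOfSurjective hg)).symm

noncomputable def quotientInfKerEquivMap (e : M →ₗ[R] N) (T : Submodule R M) :
    (↥T ⧸ (T ⊓ LinearMap.ker e).comap T.subtype) ≃ₗ[R] ↥(T.map e) :=
  have hbot : (T ⊓ LinearMap.ker e).map e = ⊥ :=
    eq_bot_iff.2 <| map_le_iff_le_comap.2 fun x hx => by simpa using hx.2
  (mapQuotientEquiv e inf_le_left le_rfl).symm.trans <|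
    quotEquivOfEqBot _ (by rw [hbot, comap_bot, ker_subtype])

theorem rank_quotient_add_rank_quotient_of_le {K M : Type*} [DivisionRing K] [AddCommGroup M]
    [Module K M] {P₀ P Q : Submodule K M} (h₀ : P₀ ≤ P) (h : P ≤ Q) :
    Module.rank K (↥Q ⧸ P.comap Q.subtype) + Module.rank K (↥P ⧸ P₀.comap P.subtype) =
      Module.rank K (↥Q ⧸ P₀.comap Q.subtype) := by
  set p₀ := P₀.comap Q.subtype
  set p := P.comap Q.subtype
  have hp : p₀ ≤ p := comap_mono h₀
  have hbot : (p₀.map p₀.mkQ).comap (p.map p₀.mkQ).subtype = ⊥ := by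
    rw [mkQ_map_self, comap_bot, ker_subtype]
  have hP : p.map Q.subtype = P := by rw [map_comap_subtype, inf_eq_right.2 h]
  have hP₀ : p₀.map Q.subtype = P₀ := by rw [map_comap_subtype, inf_eq_right.2 (h₀.trans h)]
  -- `P / P₀` sits in `Q / P₀` as the image of `P`, with quotient `Q / P`.
  have e₁ := quotientQuotientEquivQuotient p₀ p hp
  have e₂ := (quotEquivOfEqBot _ hbot).symm.trans (mapQuotientEquiv p₀.mkQ hp (by simp))
  have e₃ := mapQuotientEquiv Q.subtype hp (by simp)
  rw [hP, hP₀] at e₃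
  rw [← rank_quotient_add_rank (p.map p₀.mkQ), e₁.rank_eq, e₂.rank_eq, e₃.rank_eq]

end Submodule

section CriticalPoints

open Set
open scoped ContDiff

variable {E : Type*} [NormedAddCommGroup E] [NormedSpace ℂ E]

theorem fderiv_fderiv_apply_eq_neg_comp {f : E → ℂ} {ξ : E → E} {x : E}
    (hf : AnalyticAt ℂ f x) (hξ : DifferentiableAt ℂ ξ x)
    (h : ∀ᶠ y in 𝓝 x, fderiv ℂ f y (ξ y) = 0) :
    fderiv ℂ (fderiv ℂ f) x (ξ x) = -(fderiv ℂ f x).comp (fderiv ℂ ξ x) := by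
  have hzero : fderiv ℂ (fun y => fderiv ℂ f y (ξ y)) x = 0 := by
    rw [Filter.EventuallyEq.fderiv_eq (h.mono fun _ hy => hy)]
    exact fderiv_const_apply 0
  rw [fderiv_clm_apply hf.fderiv.differentiableAt hξ] at hzero
  have hsymm := (hf.contDiffAt (n := ω)).isSymmSndFDerivAt_of_omega
  ext v
  have hv := congrArg (fun ℓ : E →L[ℂ] ℂ => ℓ v) hzero
  simp only [add_apply, ContinuousLinearMap.comp_apply,
    ContinuousLinearMap.flip_apply, zero_apply] at hv
  rw [← hsymm v (ξ x)]
  simp only [neg_apply, ContinuousLinearMap.comp_apply]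
  linear_combination hv

theorem hasDerivAt_fderiv_comp_integralCurve {f : E → ℂ} {ξ : E → E} {γ : ℝ → E} {t : ℝ}
    (hf : AnalyticAt ℂ f (γ t)) (hξ : DifferentiableAt ℂ ξ (γ t))
    (h : ∀ᶠ y in 𝓝 (γ t), fderiv ℂ f y (ξ y) = 0) (hγ : HasDerivAt γ (ξ (γ t)) t) :
    HasDerivAt (fun s => fderiv ℂ f (γ s))
      (-(fderiv ℂ f (γ t)).comp (fderiv ℂ ξ (γ t))) t := by
  rw [← fderiv_fderiv_apply_eq_neg_comp hf hξ h]
  have := (hf.fderiv.differentiableAt.hasFDerivAt.restrictScalars ℝ).comp_hasDerivAt t hγ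
  rw [ContinuousLinearMap.coe_restrictScalars'] at this
  exact this

theorem eqOn_zero_of_hasDerivAt_neg_comp {F : Type*} [NormedAddCommGroup F] [NormedSpace ℂ F]
    {D : ℝ → E →L[ℂ] F} {Φ : ℝ → E →L[ℂ] E} {δ : ℝ}
    (hD : ∀ t ∈ Icc 0 δ, HasDerivAt D (-(D t).comp (Φ t)) t) (hΦ : ContinuousOn Φ (Icc 0 δ))
    (h₀ : D 0 = 0) : EqOn D 0 (Icc 0 δ) := by
  obtain ⟨K, hK⟩ := isCompact_Icc.exists_bound_of_continuousOn hΦ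
  refine eq_zero_of_abs_deriv_le_mul_abs_self_of_eq_zero_right (K := K)
    (fun t ht => (hD t ht).continuousAt.continuousWithinAt)
    (fun t ht => (hD t (Ico_subset_Icc_self ht)).hasDerivWithinAt) h₀ fun t ht => ?_
  calc ‖-(D t).comp (Φ t)‖ ≤ ‖D t‖ * ‖Φ t‖ := by
        rw [norm_neg]; exact ContinuousLinearMap.opNorm_comp_le _ _
    _ ≤ K * ‖D t‖ := by
        rw [mul_comm]
        exact mul_le_mul_of_nonneg_right (hK t (Ico_subset_Icc_self ht)) (norm_nonneg _)

theorem HasDerivWithinAt.eq_zero_of_eqOn_Icc {γ : ℝ → E} {v : E} {δ : ℝ} (hδ : 0 < δ)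
    (hγ : HasDerivWithinAt γ v (Icc 0 δ) 0) (hconst : EqOn γ (fun _ => γ 0) (Icc 0 δ)) :
    v = 0 :=
  (uniqueDiffOn_Icc hδ 0 (left_mem_Icc.2 hδ.le)).eq_deriv _ hγ
    ((hasDerivWithinAt_const _ _ (γ 0)).congr hconst rfl)

theorem eq_zero_of_eventually_fderiv_apply_eq_zero [CompleteSpace E] {f : E → ℂ} {ξ : E → E}
    {x₀ : E} (hf : AnalyticAt ℂ f x₀) (hξ : AnalyticAt ℂ ξ x₀) (hcrit : fderiv ℂ f x₀ = 0)
    (hiso : ∀ᶠ x in 𝓝 x₀, fderiv ℂ f x = 0 → x = x₀)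
    (h : ∀ᶠ x in 𝓝 x₀, fderiv ℂ f x (ξ x) = 0) : ξ x₀ = 0 := by
  obtain ⟨γ, hγ₀, ε, hε, hγ⟩ := ((hξ.contDiffAt (n := 1)).restrict_scalars ℝ
    ).exists_forall_mem_closedBall_exists_eq_forall_mem_Ioo_hasDerivAt₀ 0
  have hgood : ∀ᶠ x in 𝓝 x₀, AnalyticAt ℂ f x ∧ AnalyticAt ℂ ξ x ∧
      (∀ᶠ y in 𝓝 x, fderiv ℂ f y (ξ y) = 0) ∧ (fderiv ℂ f x = 0 → x = x₀) :=
    hf.eventually_analyticAt.and (hξ.eventually_analyticAt.and (h.eventually_nhds.and hiso))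
  have hγcont : Tendsto γ (𝓝 0) (𝓝 x₀) := by
    rw [← hγ₀]; exact (hγ 0 (by simp [hε])).continuousAt
  have hIoo : ∀ᶠ t in 𝓝 (0 : ℝ), t ∈ Ioo (0 - ε) (0 + ε) :=
    Ioo_mem_nhds (by linarith) (by linarith)
  have hnear : ∀ᶠ t in 𝓝 (0 : ℝ), t ∈ Ioo (0 - ε) (0 + ε) ∧ AnalyticAt ℂ f (γ t) ∧
      AnalyticAt ℂ ξ (γ t) ∧ (∀ᶠ y in 𝓝 (γ t), fderiv ℂ f y (ξ y) = 0) ∧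
      (fderiv ℂ f (γ t) = 0 → γ t = x₀) :=
    hIoo.and (hγcont.eventually hgood)
  obtain ⟨u, hu, hnear⟩ := exists_Ico_subset_of_mem_nhds hnear ⟨1, one_pos⟩
  have hδ : 0 < u / 2 := half_pos hu
  have hIcc : ∀ t ∈ Icc 0 (u / 2), t ∈ Ico 0 u := fun t ht => ⟨ht.1, by linarith [ht.2]⟩
  have hcurve : ∀ t ∈ Icc 0 (u / 2), HasDerivAt γ (ξ (γ t)) t :=
    fun t ht => hγ t (hnear (hIcc t ht)).1
  have hcrit_along : EqOn (fun t => fderiv ℂ f (γ t)) 0 (Icc 0 (u / 2)) := by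
    refine eqOn_zero_of_hasDerivAt_neg_comp (Φ := fun t => fderiv ℂ ξ (γ t))
      (fun t ht => ?_) (fun t ht => ?_) (by simpa [hγ₀])
    · obtain ⟨-, hft, hξt, hzero, -⟩ := hnear (hIcc t ht)
      exact hasDerivAt_fderiv_comp_integralCurve hft hξt.differentiableAt hzero (hcurve t ht)
    · exact (hnear (hIcc t ht)).2.2.1.fderiv.continuousAt.comp_continuousWithinAt
        (hcurve t ht).continuousAt.continuousWithinAt
  have hstuck : EqOn γ (fun _ => γ 0) (Icc 0 (u / 2)) := fun t ht => by
    rw [hγ₀]; exact (hnear (hIcc t ht)).2.2.2.2 (hcrit_along ht)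
  simpa [hγ₀] using (hcurve 0 (left_mem_Icc.2 hδ.le)).hasDerivWithinAt.eq_zero_of_eqOn_Icc hδ hstuck

end CriticalPoints

section AnalyticGerms

variable (n : ℕ)

def analyticGerms : Submodule ℂ (GermC n) where
  carrier := {g | ∃ F : Cn n → ℂ, AnalyticAt ℂ F 0 ∧ (F : GermC n) = g}
  add_mem' := by rintro _ _ ⟨F, hF, rfl⟩ ⟨G, hG, rfl⟩; exact ⟨F + G, hF.add hG, rfl⟩
  zero_mem' := ⟨0, analyticAt_const, rfl⟩
  smul_mem' := by rintro c _ ⟨F, hF, rfl⟩; exact ⟨c • F, analyticAt_const.smul hF, rfl⟩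

theorem On_eq_analyticGerms : On n = analyticGerms n :=
  Submodule.span_eq (analyticGerms n)

theorem mn_eq_analyticGerms_inf_ker :
    mn n = analyticGerms n ⊓ LinearMap.ker Germ.valueₗ :=
  le_antisymm (Submodule.span_le.2 fun _ ⟨F, hF, hF0, hg⟩ => hg ▸ ⟨⟨F, hF, rfl⟩, hF0⟩)
    fun _ ⟨⟨F, hF, hg⟩, hg0⟩ => Submodule.subset_span ⟨F, hF, by subst hg; exact hg0, hg⟩

theorem mn_le_On : mn n ≤ On n := by
  rw [mn_eq_analyticGerms_inf_ker, On_eq_analyticGerms]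
  exact inf_le_left

theorem rank_On_quotient_mn : Module.rank ℂ (↥(On n) ⧸ (mn n).comap (On n).subtype) = 1 := by
  have htop : (analyticGerms n).map (Germ.valueₗ (𝕜 := ℂ)) = ⊤ :=
    eq_top_iff.2 fun c _ => ⟨_, ⟨fun _ => c, analyticAt_const, rfl⟩, rfl⟩
  rw [mn_eq_analyticGerms_inf_ker, On_eq_analyticGerms,
    (Submodule.quotientInfKerEquivMap _ _).rank_eq, htop, rank_top, Module.rank_self]

end AnalyticGerms

section TangentFields

variable {n : ℕ}

theorem fderiv_apply_eq_sum_pdC (f : Cn n → ℂ) (x v : Cn n) :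
    fderiv ℂ f x v = ∑ i, v i * pdC i f x := by
  conv_lhs => rw [← (Pi.basisFun ℂ (Fin n)).sum_repr v]
  simp [pdC]

theorem fderiv_eq_zero_iff_pdC_eq_zero (f : Cn n → ℂ) (x : Cn n) :
    fderiv ℂ f x = 0 ↔ ∀ i, pdC i f x = 0 :=
  ⟨fun h i => by simp [pdC, h],
    fun h => ContinuousLinearMap.ext fun v => by simp [fderiv_apply_eq_sum_pdC, h]⟩

theorem analyticAt_pdC {f : Cn n → ℂ} {x : Cn n} (hf : AnalyticAt ℂ f x) (i : Fin n) :
    AnalyticAt ℂ (pdC i f) x :=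
  (ContinuousLinearMap.apply ℂ ℂ (Pi.single i 1 : Cn n)).analyticAt _ |>.comp hf.fderiv

def tangentFields (φ : Cn n → ℂ) : Submodule ℂ (Cn n → Cn n) where
  carrier := {η | TangentVF φ η}
  add_mem' := by
    rintro η ζ ⟨hη, a, ha, hηa⟩ ⟨hζ, b, hb, hζb⟩
    refine ⟨fun i => (hη i).add (hζ i), a + b, ha.add hb, ?_⟩
    filter_upwards [hηa, hζb] with x hx hy
    simp [add_mul, Finset.sum_add_distrib, hx, hy]
  zero_mem' := ⟨fun _ => analyticAt_const, 0, analyticAt_const, by simp⟩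
  smul_mem' := by
    rintro c η ⟨hη, a, ha, hηa⟩
    refine ⟨fun i => analyticAt_const.mul (hη i), c • a, analyticAt_const.smul ha, ?_⟩
    filter_upwards [hηa] with x hx
    simp [mul_assoc, ← Finset.mul_sum, hx]

@[simp]
theorem mem_tangentFields {φ : Cn n → ℂ} {η : Cn n → Cn n} :
    η ∈ tangentFields φ ↔ TangentVF φ η :=
  Iff.rfl

noncomputable def germDf (f : Cn n → ℂ) : (Cn n → Cn n) →ₗ[ℂ] GermC n where
  toFun η := ((fun x => ∑ i, η x i * pdC i f x : Cn n → ℂ) : GermC n)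
  map_add' η ζ := by
    rw [← Germ.coe_add]; congr 1; funext x; simp [add_mul, Finset.sum_add_distrib]
  map_smul' c η := by
    rw [RingHom.id_apply, ← Germ.coe_smul]; congr 1; funext x; simp [Finset.mul_sum, mul_assoc]

theorem dfThetaX_eq_map (φ f : Cn n → ℂ) :
    dfThetaX φ f = (tangentFields φ).map (germDf f) :=
  Submodule.span_eq ((tangentFields φ).map (germDf f))

theorem dfThetaX0_eq_map_s2 (φ f : Cn n → ℂ) :
    dfThetaX0 φ f = (tangentFields φ ⊓ LinearMap.ker (LinearMap.proj 0)).map (germDf f) := by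
  rw [dfThetaX0, ← Submodule.span_eq (Submodule.map _ _)]
  congr 1
  ext g
  simp [germDf, and_assoc]

theorem span_tangentVF_eval_eq_map (φ : Cn n → ℂ) :
    Submodule.span ℂ {y : Cn n | ∃ η, TangentVF φ η ∧ η 0 = y} =
      (tangentFields φ).map (LinearMap.proj 0) :=
  Submodule.span_eq ((tangentFields φ).map (LinearMap.proj 0))

theorem dfThetaX_le_mn (φ : Cn n → ℂ) {f : Cn n → ℂ} (hf : AnalyticAt ℂ f 0)
    (hcrit : ∀ i, pdC i f 0 = 0) : dfThetaX φ f ≤ mn n := by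
  rw [dfThetaX_eq_map, mn_eq_analyticGerms_inf_ker]
  rintro _ ⟨η, hη, rfl⟩
  exact ⟨⟨_, Finset.analyticAt_fun_sum _ fun i _ => (hη.1 i).mul (analyticAt_pdC hf i), rfl⟩,
    show ∑ i, η 0 i * pdC i f 0 = 0 by simp [hcrit]⟩

theorem dfThetaX0_le_dfThetaX (φ f : Cn n → ℂ) : dfThetaX0 φ f ≤ dfThetaX φ f := by
  rw [dfThetaX_eq_map, dfThetaX0_eq_map_s2]
  exact Submodule.map_mono inf_le_left

theorem tangentFields_inf_ker_germDf_le (φ : Cn n → ℂ) {f : Cn n → ℂ} (hf : AnalyticAt ℂ f 0)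
    (hiso : IsolatedSingAt f) :
    tangentFields φ ⊓ LinearMap.ker (germDf f) ≤ LinearMap.ker (LinearMap.proj 0) := by
  rintro η ⟨hη, hker⟩
  have hzero : ∀ᶠ x in 𝓝 0, fderiv ℂ f x (η x) = 0 := by
    filter_upwards [Germ.coe_eq.1 hker] with x hx
    rw [fderiv_apply_eq_sum_pdC]
    exact hx
  refine eq_zero_of_eventually_fderiv_apply_eq_zero hf (AnalyticAt.pi hη.1)
    ((fderiv_eq_zero_iff_pdC_eq_zero f 0).2 hiso.1) ?_ hzero
  filter_upwards [hiso.2] with x hx hcrit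
  exact hx ((fderiv_eq_zero_iff_pdC_eq_zero f x).1 hcrit)

theorem rank_dfThetaX_quotient_dfThetaX0 (φ : Cn n → ℂ) {f : Cn n → ℂ} (hf : AnalyticAt ℂ f 0)
    (hiso : IsolatedSingAt f) :
    Module.rank ℂ (↥(dfThetaX φ f) ⧸ (dfThetaX0 φ f).comap (dfThetaX φ f).subtype) =
      Module.finrank ℂ (Submodule.span ℂ {y : Cn n | ∃ η, TangentVF φ η ∧ η 0 = y}) := by
  rw [dfThetaX_eq_map, dfThetaX0_eq_map_s2, span_tangentVF_eval_eq_map, Module.finrank_eq_rank,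
    ((Submodule.mapQuotientEquiv (germDf f) inf_le_left
      (le_inf inf_le_left (tangentFields_inf_ker_germDf_le φ hf hiso))).trans
      (Submodule.quotientInfKerEquivMap _ _)).rank_eq]

end TangentFields

theorem statement2_general (n : ℕ) (φ f : Cn n → ℂ)
    (hf : AnalyticAt ℂ f 0)
    (hiso : IsolatedSingAt f)
    (hfin : FiniteDimensional ℂ (BRQuot φ f)) :
    Module.finrank ℂ (RXQuot φ f) =
      Module.finrank ℂ (BRQuot φ f) +
        Module.finrank ℂ (Submodule.span ℂ {y : Cn n | ∃ η, TangentVF φ η ∧ η 0 = y}) - 1 := by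
  have hA : dfThetaX φ f ≤ mn n := dfThetaX_le_mn φ hf hiso.1
  have hBR : Module.rank ℂ (BRQuot φ f) =
      1 + Module.rank ℂ (↥(mn n) ⧸ (dfThetaX φ f).comap (mn n).subtype) := by
    rw [← rank_On_quotient_mn n, Submodule.rank_quotient_add_rank_quotient_of_le hA (mn_le_On n)]
  have hRX : Module.rank ℂ (RXQuot φ f) =
      Module.rank ℂ (↥(mn n) ⧸ (dfThetaX φ f).comap (mn n).subtype) +
        Module.finrank ℂ (Submodule.span ℂ {y : Cn n | ∃ η, TangentVF φ η ∧ η 0 = y}) := by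
    rw [← rank_dfThetaX_quotient_dfThetaX0 φ hf hiso,
      Submodule.rank_quotient_add_rank_quotient_of_le (dfThetaX0_le_dfThetaX φ f) hA]
  obtain ⟨k, hk⟩ := Cardinal.lt_aleph0.1
    (le_add_self.trans_lt (hBR ▸ Module.rank_lt_aleph0 ℂ (BRQuot φ f)))
  rw [Module.finrank, Module.finrank, hRX, hBR, hk]
  norm_cast
  omega

/-- For a hypersurface germ `X = φ⁻¹(0) ⊆ (ℂ^n,0)` and `f` with isolated
singularity at `0` and finite Bruce–Roberts number, `ℛ_X-cod(f) = μ_BR(f,X) + s − 1`. -/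
theorem statement2 (n : ℕ) (φ f : Cn n → ℂ)
    (hφ : AnalyticAt ℂ φ 0) (hφ0 : φ 0 = 0)
    (hf : AnalyticAt ℂ f 0) (hf0 : f 0 = 0)
    (hiso : IsolatedSingAt f)
    (hfin : FiniteDimensional ℂ (BRQuot φ f)) :
    Module.finrank ℂ (RXQuot φ f) =
      Module.finrank ℂ (BRQuot φ f) +
        Module.finrank ℂ (Submodule.span ℂ {y : Cn n | ∃ η, TangentVF φ η ∧ η 0 = y}) - 1 :=
  statement2_general n φ f hf hiso hfin
end
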